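/- Let φ : a₁ × b₁ → ℂ and χ : a₂ × b₂ → ℂ be unit vectors on products of finite nonempty types, and let ψ : (a₁ × a₂) × (b₁ × b₂) → ℂ be their tensor product, ψ ((i₁,i₂),(j₁,j₂)) = φ (i₁,j₁) * χ (i₂,j₂). Then the von Neumann entropy of the reduction of |ψ⟩⟨ψ| onto a₁ × a₂ equals the sum of the von Neumann entropies of the reduction of |φ⟩⟨φ| onto a₁ and of the reduction of |χ⟩⟨χ| onto a₂. (This additivity under tensor products underlies the claim that a product state |φ⟩_{A,B₁⋯B_k} ⊗ |ψ⟩_{A,B_{k+1}⋯B_m} has a combing region lying in a lower-dimensional hyperplane, signalling absence of genuine (m+1)-partite entanglement.) -/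

import Mathlib

/-- The density matrix `|ψ⟩⟨ψ|` of a vector `ψ`. -/
noncomputable def densityMatrix {n : Type} [Fintype n] (ψ : n → ℂ) : Matrix n n ℂ :=
  fun i j => ψ i * star (ψ j)

/-- Partial trace over the second tensor factor. -/
noncomputable def ptraceB {a b : Type} [Fintype a] [Fintype b]
    (ρ : Matrix (a × b) (a × b) ℂ) : Matrix a a ℂ :=
  fun i j => ∑ k : b, ρ (i, k) (j, k)

/-- The von Neumann entropy of a Hermitian matrix, `S(σ) = ∑ᵢ -λᵢ log λᵢ`. -/
noncomputable def vonNeumannEntropy {n : Type} [Fintype n] [DecidableEq n]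
    {σ : Matrix n n ℂ} (hσ : σ.IsHermitian) : ℝ :=
  ∑ i, Real.negMulLog (hσ.eigenvalues i)

/-!
The reduction of `φ ⊗ χ` is the Kronecker product of the reductions of `φ` and `χ`. Conjugating
the diagonalisations of the factors by the Kronecker product of their eigenvector unitaries shows
that its eigenvalues are the products `λᵢ μⱼ`, and `negMulLog (x y) = y negMulLog x + x negMulLog y`
together with `∑ λᵢ = ∑ μⱼ = 1` (the reductions have trace one) splits the entropy.
-/

open Finset Polynomial
open scoped Kronecker

namespace Matrix

variable {𝕜 : Type*} [RCLike 𝕜] {m n : Type*} [Fintype m] [DecidableEq m]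
  [Fintype n] [DecidableEq n]

lemma charpoly_mul_mul_of_mul_eq_one {R : Type*} [CommRing R] {U D V : Matrix n n R}
    (hVU : V * U = 1) : (U * D * V).charpoly = D.charpoly := by
  rw [mul_assoc, charpoly_mul_comm, mul_assoc, hVU, mul_one]

lemma IsHermitian.map_eigenvalues_eq_of_eq_mul_diagonal_mul {A U V : Matrix n n 𝕜}
    (hA : A.IsHermitian) {d : n → ℝ} (hVU : V * U = 1)
    (hA_eq : A = U * diagonal (fun i => (d i : 𝕜)) * V) :
    univ.val.map hA.eigenvalues = univ.val.map d := by
  have hchar : A.charpoly = ∏ i, (X - C (d i : 𝕜)) := by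
    rw [hA_eq, charpoly_mul_mul_of_mul_eq_one hVU, charpoly_diagonal]
  have hroots := hA.roots_charpoly_eq_eigenvalues
  rw [hchar, roots_prod _ _ (prod_ne_zero_iff.mpr fun i _ => X_sub_C_ne_zero _)] at hroots
  simp only [roots_X_sub_C, Multiset.bind_singleton, ← Multiset.map_map] at hroots
  refine Multiset.map_injective (RCLike.ofReal_injective (K := 𝕜)) ?_
  rw [← hroots, Multiset.map_map]
  rfl

lemma IsHermitian.map_eigenvalues_kronecker {A : Matrix m m 𝕜} {B : Matrix n n 𝕜}
    (hA : A.IsHermitian) (hB : B.IsHermitian) (hAB : (A ⊗ₖ B).IsHermitian) :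
    univ.val.map hAB.eigenvalues =
      univ.val.map fun p : m × n => hA.eigenvalues p.1 * hB.eigenvalues p.2 := by
  set U := (hA.eigenvectorUnitary : Matrix m m 𝕜)
  set V := (hB.eigenvectorUnitary : Matrix n n 𝕜)
  refine hAB.map_eigenvalues_eq_of_eq_mul_diagonal_mul
    (U := U ⊗ₖ V) (V := star U ⊗ₖ star V) ?_ ?_
  · rw [← mul_kronecker_mul, UnitaryGroup.star_mul_self, UnitaryGroup.star_mul_self,
      one_kronecker_one]
  · conv_lhs => rw [hA.spectral_theorem, hB.spectral_theorem]
    simp only [Unitary.conjStarAlgAut_apply, mul_kronecker_mul, diagonal_kronecker_diagonal]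
    congr
    ext
    simp

lemma IsHermitian.sum_eigenvalues_eq_one_of_trace_eq_one {A : Matrix n n 𝕜}
    (hA : A.IsHermitian) (htr : A.trace = 1) : ∑ i, hA.eigenvalues i = 1 := by
  have h := hA.trace_eq_sum_eigenvalues
  rw [htr] at h
  exact_mod_cast h.symm

end Matrix

open Matrix Real

lemma vonNeumannEntropy_congr {n : Type} [Fintype n] [DecidableEq n] {σ τ : Matrix n n ℂ}
    (hσ : σ.IsHermitian) (hτ : τ.IsHermitian) (h : σ = τ) :
    vonNeumannEntropy hσ = vonNeumannEntropy hτ := by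
  subst h
  rfl

lemma vonNeumannEntropy_kronecker {m n : Type} [Fintype m] [DecidableEq m]
    [Fintype n] [DecidableEq n] {A : Matrix m m ℂ} {B : Matrix n n ℂ}
    (hA : A.IsHermitian) (hB : B.IsHermitian) (hAB : (A ⊗ₖ B).IsHermitian)
    (htrA : A.trace = 1) (htrB : B.trace = 1) :
    vonNeumannEntropy hAB = vonNeumannEntropy hA + vonNeumannEntropy hB := by
  have hsumA := hA.sum_eigenvalues_eq_one_of_trace_eq_one htrA
  have hsumB := hB.sum_eigenvalues_eq_one_of_trace_eq_one htrB
  calc vonNeumannEntropy hAB = ((univ.val.map hAB.eigenvalues).map negMulLog).sum := by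
        rw [Multiset.map_map]
        rfl
    _ = ∑ i, ∑ j, negMulLog (hA.eigenvalues i * hB.eigenvalues j) := by
        rw [hA.map_eigenvalues_kronecker hB hAB, Multiset.map_map, ← Fintype.sum_prod_type']
        rfl
    _ = (∑ j, hB.eigenvalues j) * vonNeumannEntropy hA
          + (∑ i, hA.eigenvalues i) * vonNeumannEntropy hB := by
        simp only [negMulLog_mul, sum_add_distrib, vonNeumannEntropy, ← mul_sum, ← sum_mul]
    _ = vonNeumannEntropy hA + vonNeumannEntropy hB := by
        rw [hsumA, hsumB, one_mul, one_mul]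

lemma trace_ptraceB {a b : Type} [Fintype a] [Fintype b] (ρ : Matrix (a × b) (a × b) ℂ) :
    (ptraceB ρ).trace = ρ.trace := by
  simp only [trace, Matrix.diag, ptraceB, Fintype.sum_prod_type]

lemma trace_densityMatrix {n : Type} [Fintype n] (ψ : n → ℂ) :
    (densityMatrix ψ).trace = ((∑ x, ‖ψ x‖ ^ 2 : ℝ) : ℂ) := by
  simp [trace, densityMatrix, Complex.mul_conj']

lemma ptraceB_densityMatrix_eq_kronecker {a₁ b₁ a₂ b₂ : Type}
    [Fintype a₁] [Fintype b₁] [Fintype a₂] [Fintype b₂]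
    (φ : a₁ × b₁ → ℂ) (χ : a₂ × b₂ → ℂ) (ψ : (a₁ × a₂) × (b₁ × b₂) → ℂ)
    (hψ : ∀ i₁ i₂ j₁ j₂, ψ ((i₁, i₂), (j₁, j₂)) = φ (i₁, j₁) * χ (i₂, j₂)) :
    ptraceB (densityMatrix ψ) = ptraceB (densityMatrix φ) ⊗ₖ ptraceB (densityMatrix χ) := by
  ext ⟨i₁, i₂⟩ ⟨j₁, j₂⟩
  simp only [ptraceB, densityMatrix, kroneckerMap_apply, Fintype.sum_prod_type, sum_mul_sum, hψ,
    star_mul']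
  refine sum_congr rfl fun k₁ _ => sum_congr rfl fun k₂ _ => ?_
  ring

lemma trace_ptraceB_densityMatrix {a b : Type} [Fintype a] [Fintype b] {φ : a × b → ℂ}
    (hφ : ∑ x, ‖φ x‖ ^ 2 = 1) : (ptraceB (densityMatrix φ)).trace = 1 := by
  rw [trace_ptraceB, trace_densityMatrix, hφ, Complex.ofReal_one]

theorem entropy_reduction_tensor_eq_add_general
    {a₁ b₁ a₂ b₂ : Type}
    [Fintype a₁] [DecidableEq a₁]
    [Fintype b₁]
    [Fintype a₂] [DecidableEq a₂]
    [Fintype b₂]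
    (φ : a₁ × b₁ → ℂ) (hφ : ∑ x, ‖φ x‖ ^ 2 = 1)
    (χ : a₂ × b₂ → ℂ) (hχ : ∑ x, ‖χ x‖ ^ 2 = 1)
    (ψ : (a₁ × a₂) × (b₁ × b₂) → ℂ)
    (hψ : ∀ i₁ i₂ j₁ j₂, ψ ((i₁, i₂), (j₁, j₂)) = φ (i₁, j₁) * χ (i₂, j₂))
    (hψA : (ptraceB (densityMatrix ψ)).IsHermitian)
    (hφA : (ptraceB (densityMatrix φ)).IsHermitian)
    (hχA : (ptraceB (densityMatrix χ)).IsHermitian) :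
    vonNeumannEntropy hψA = vonNeumannEntropy hφA + vonNeumannEntropy hχA := by
  have hprod := ptraceB_densityMatrix_eq_kronecker φ χ ψ hψ
  have hkron : (ptraceB (densityMatrix φ) ⊗ₖ ptraceB (densityMatrix χ)).IsHermitian :=
    hprod ▸ hψA
  rw [vonNeumannEntropy_congr hψA hkron hprod]
  exact vonNeumannEntropy_kronecker hφA hχA hkron
    (trace_ptraceB_densityMatrix hφ) (trace_ptraceB_densityMatrix hχ)

/-- For a tensor product `ψ = φ ⊗ χ` of pure bipartite states, the entropy of the
reduction onto `a₁ × a₂` is the sum of the entropies of the reductions of the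
factors onto `a₁` and `a₂` respectively. -/
theorem entropy_reduction_tensor_eq_add
    {a₁ b₁ a₂ b₂ : Type}
    [Fintype a₁] [DecidableEq a₁] [Nonempty a₁]
    [Fintype b₁] [DecidableEq b₁] [Nonempty b₁]
    [Fintype a₂] [DecidableEq a₂] [Nonempty a₂]
    [Fintype b₂] [DecidableEq b₂] [Nonempty b₂]
    (φ : a₁ × b₁ → ℂ) (hφ : ∑ x, ‖φ x‖ ^ 2 = 1)
    (χ : a₂ × b₂ → ℂ) (hχ : ∑ x, ‖χ x‖ ^ 2 = 1)
    (ψ : (a₁ × a₂) × (b₁ × b₂) → ℂ)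
    (hψ : ∀ i₁ i₂ j₁ j₂, ψ ((i₁, i₂), (j₁, j₂)) = φ (i₁, j₁) * χ (i₂, j₂))
    (hψA : (ptraceB (densityMatrix ψ)).IsHermitian)
    (hφA : (ptraceB (densityMatrix φ)).IsHermitian)
    (hχA : (ptraceB (densityMatrix χ)).IsHermitian) :
    vonNeumannEntropy hψA = vonNeumannEntropy hφA + vonNeumannEntropy hχA :=
  entropy_reduction_tensor_eq_add_general φ hφ χ hχ ψ hψ hψA hφA hχA
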